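/- There do not exist five points p_1, …, p_5 in the Euclidean plane ℝ² such that each of the six distances dist(p_i, p_α), for i ∈ {1,2,3} and α ∈ {4,5}, is strictly less than each of the remaining pairwise distances dist(p_1,p_2), dist(p_1,p_3), dist(p_2,p_3), and dist(p_4,p_5). Consequently, a 5×5 matrix ordering in which the six entries M_{iα} (i ∈ {1,2,3}, α ∈ {4,5}) are the six smallest off-diagonal entries cannot be geometrically realized by points in the plane. -/

import Mathlib

/-!
Put `x = p₃`, `y = p₄`. Each of `p₀, p₁, p₂` is closer to both `x` and `y` than `x` is to `y`,
so after the similarity `z ↦ (z - x) / (y - x)` of `ℂ` it lies in the strip `0 ≤ re ≤ 1`.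
Two of the three points, say `a` and `b`, lie on the same closed side of the line `xy`. Then
`|re (a - b)|` is bounded by `re b` or by `1 - re a`, and `|im (a - b)|` by `|im a|` or `|im b|`,
so `dist a b` is at most one of `dist a x, dist a y, dist b x, dist b y`, contradicting the
hypothesis. The statement about matrix orderings follows because `matOrd` reflects the strict
order of the off-diagonal entries of a symmetric matrix.
-/

/-- The matrix ordering `M̂`: for off-diagonal indices `i ≠ j`, `matOrd M i j` is the
number of upper-triangular entries `M k ℓ` (with `k < ℓ`) that are strictly smaller
than `M i j`. -/
noncomputable def matOrd {N : ℕ} (M : Matrix (Fin N) (Fin N) ℝ) (i j : Fin N) : ℕ :=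
  (Finset.univ.filter (fun q : Fin N × Fin N => q.1 < q.2 ∧ M q.1 q.2 < M i j)).card

open Set

lemma abs_sub_le_abs_or_abs_sub_le_abs_of_mul_nonneg {a b : ℝ} (h : 0 ≤ a * b) :
    |a - b| ≤ |a| ∨ |a - b| ≤ |b| := by
  rcases mul_nonneg_iff.1 h with ⟨ha, hb⟩ | ⟨ha, hb⟩ <;> rcases le_total a b with hab | hab
  · exact .inr (by rw [abs_of_nonpos (by linarith), abs_of_nonneg hb]; linarith)
  · exact .inl (by rw [abs_of_nonneg (by linarith), abs_of_nonneg ha]; linarith)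
  · exact .inl (by rw [abs_of_nonpos (by linarith), abs_of_nonpos ha]; linarith)
  · exact .inr (by rw [abs_of_nonneg (by linarith), abs_of_nonpos hb]; linarith)

lemma mul_nonneg_or_mul_nonneg_or_mul_nonneg (a b c : ℝ) : 0 ≤ a * b ∨ 0 ≤ a * c ∨ 0 ≤ b * c := by
  rcases le_total 0 a with ha | ha <;> rcases le_total 0 b with hb | hb <;>
    rcases le_total 0 c with hc | hc
  all_goals first
    | exact Or.inl (by nlinarith) | exact Or.inr (Or.inl (by nlinarith))
    | exact Or.inr (Or.inr (by nlinarith))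

def CrossEntriesSmallest (f : Fin 5 → Fin 5 → ℝ) : Prop :=
  ∀ i α j l : Fin 5, i ∈ ({0, 1, 2} : Set (Fin 5)) → α ∈ ({3, 4} : Set (Fin 5)) →
    (j, l) ∈ ({(0, 1), (0, 2), (1, 2), (3, 4)} : Set (Fin 5 × Fin 5)) → f i α < f j l

namespace Complex

lemma norm_le_norm_of_abs_re_le_of_abs_im_le {w z : ℂ} (hre : |w.re| ≤ |z.re|)
    (him : |w.im| ≤ |z.im|) : ‖w‖ ≤ ‖z‖ := by
  rw [← sq_le_sq₀ (norm_nonneg w) (norm_nonneg z), Complex.sq_norm, Complex.sq_norm,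
    normSq_apply, normSq_apply]
  nlinarith [sq_le_sq.2 hre, sq_le_sq.2 him]

lemma re_mem_Icc_of_dist_le_one {w : ℂ} (h₀ : dist w 0 ≤ 1) (h₁ : dist w 1 ≤ 1) :
    w.re ∈ Icc (0 : ℝ) 1 := by
  rw [dist_zero_right] at h₀
  rw [dist_eq_norm] at h₁
  have h₀' := pow_le_one₀ (norm_nonneg _) h₀ (n := 2)
  have h₁' := pow_le_one₀ (norm_nonneg _) h₁ (n := 2)
  rw [Complex.sq_norm, normSq_apply] at h₀' h₁'
  simp only [sub_re, one_re, sub_im, one_im, sub_zero] at h₁'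
  constructor <;> nlinarith

lemma dist_le_max_of_im_mul_nonneg {w z : ℂ} (hw : w.re ∈ Icc (0 : ℝ) 1)
    (hz : z.re ∈ Icc (0 : ℝ) 1) (him : 0 ≤ w.im * z.im) :
    dist w z ≤ max (max (dist w 0) (dist w 1)) (max (dist z 0) (dist z 1)) := by
  wlog hwz : w.re ≤ z.re generalizing w z
  · rw [dist_comm, max_comm]
    exact this hz hw (by rwa [mul_comm]) (le_of_not_ge hwz)
  simp only [dist_eq_norm, sub_zero]
  have hre_z : |(w - z).re| ≤ |z.re| := by
    rw [sub_re, abs_le]; constructor <;> cases abs_cases z.re <;> linarith [hw.1]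
  have hre_w : |(w - z).re| ≤ |(w - 1).re| := by
    rw [sub_re, sub_re, one_re, abs_le]; constructor <;> cases abs_cases (w.re - 1) <;>
      linarith [hz.2]
  rcases abs_sub_le_abs_or_abs_sub_le_abs_of_mul_nonneg him with h | h
  · have : ‖w - z‖ ≤ ‖w - 1‖ :=
      norm_le_norm_of_abs_re_le_of_abs_im_le hre_w (by simpa using h)
    exact this.trans ((le_max_right _ _).trans (le_max_left _ _))
  · have : ‖w - z‖ ≤ ‖z‖ := norm_le_norm_of_abs_re_le_of_abs_im_le hre_z (by simpa using h)
    exact this.trans ((le_max_left _ _).trans (le_max_right _ _))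

lemma dist_le_max_of_im_div_mul_nonneg {x y a b : ℂ} (hxy : x ≠ y)
    (hax : dist a x ≤ dist x y) (hay : dist a y ≤ dist x y)
    (hbx : dist b x ≤ dist x y) (hby : dist b y ≤ dist x y)
    (hside : 0 ≤ ((a - x) / (y - x)).im * ((b - x) / (y - x)).im) :
    dist a b ≤ max (max (dist a x) (dist a y)) (max (dist b x) (dist b y)) := by
  set f : ℂ → ℂ := fun z => (z - x) / (y - x) with hf
  have hyx : y - x ≠ 0 := sub_ne_zero.2 hxy.symm
  have hr : 0 < dist x y := dist_pos.2 hxy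
  have hfx : f x = 0 := by simp [hf]
  have hfy : f y = 1 := div_self hyx
  have hdist : ∀ u v, dist (f u) (f v) = dist u v / dist x y := by
    intro u v
    rw [dist_eq_norm, hf, ← sub_div, sub_sub_sub_cancel_right, norm_div, ← dist_eq_norm,
      dist_comm x y, dist_eq_norm y x]
  have hIcc : ∀ u, dist u x ≤ dist x y → dist u y ≤ dist x y → (f u).re ∈ Icc (0 : ℝ) 1 := by
    intro u hux huy
    apply re_mem_Icc_of_dist_le_one
    · rwa [← hfx, hdist, div_le_one hr]
    · rwa [← hfy, hdist, div_le_one hr]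
  have key : dist (f a) (f b) ≤ max (max (dist (f a) (f x)) (dist (f a) (f y)))
      (max (dist (f b) (f x)) (dist (f b) (f y))) := by
    rw [hfx, hfy]
    exact dist_le_max_of_im_mul_nonneg (hIcc a hax hay) (hIcc b hbx hby) hside
  simpa only [hdist, max_div_div_right hr.le, div_le_div_iff_of_pos_right hr] using key

lemma not_crossEntriesSmallest_dist (p : Fin 5 → ℂ) :
    ¬ CrossEntriesSmallest fun a b => dist (p a) (p b) := by
  intro h
  have hxy : p 3 ≠ p 4 :=
    dist_pos.1 (dist_nonneg.trans_lt (h 0 3 3 4 (by simp) (by simp) (by simp)))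
  let side : Fin 5 → ℝ := fun i => ((p i - p 3) / (p 4 - p 3)).im
  have pair : ∀ i j : Fin 5, i ∈ ({0, 1, 2} : Set (Fin 5)) → j ∈ ({0, 1, 2} : Set (Fin 5)) →
      (i, j) ∈ ({(0, 1), (0, 2), (1, 2), (3, 4)} : Set (Fin 5 × Fin 5)) →
      ¬ 0 ≤ side i * side j := by
    intro i j hi hj hij hside
    have h34 : (3, 4) ∈ ({(0, 1), (0, 2), (1, 2), (3, 4)} : Set (Fin 5 × Fin 5)) := by simp
    have h3 : (3 : Fin 5) ∈ ({3, 4} : Set (Fin 5)) := by simp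
    have h4 : (4 : Fin 5) ∈ ({3, 4} : Set (Fin 5)) := by simp
    have hab := dist_le_max_of_im_div_mul_nonneg hxy (h i 3 3 4 hi h3 h34).le
      (h i 4 3 4 hi h4 h34).le (h j 3 3 4 hj h3 h34).le (h j 4 3 4 hj h4 h34).le hside
    exact hab.not_gt <| max_lt (max_lt (h i 3 i j hi h3 hij) (h i 4 i j hi h4 hij))
      (max_lt (h j 3 i j hj h3 hij) (h j 4 i j hj h4 hij))
  rcases mul_nonneg_or_mul_nonneg_or_mul_nonneg (side 0) (side 1) (side 2) with h01 | h02 | h12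
  · exact pair 0 1 (by simp) (by simp) (by simp) h01
  · exact pair 0 2 (by simp) (by simp) (by simp) h02
  · exact pair 1 2 (by simp) (by simp) (by simp) h12

end Complex

lemma not_crossEntriesSmallest_dist_euclideanSpace (p : Fin 5 → EuclideanSpace ℝ (Fin 2)) :
    ¬ CrossEntriesSmallest fun a b => dist (p a) (p b) := by
  simpa only [Function.comp_apply, LinearIsometryEquiv.dist_map] using
    Complex.not_crossEntriesSmallest_dist (Complex.orthonormalBasisOneI.repr.symm ∘ p)

lemma matOrd_le_matOrd {N : ℕ} (M : Matrix (Fin N) (Fin N) ℝ) {i j k l : Fin N}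
    (h : M i j ≤ M k l) : matOrd M i j ≤ matOrd M k l :=
  Finset.card_le_card <| Finset.monotone_filter_right _ fun _ _ hq => ⟨hq.1, hq.2.trans_le h⟩

lemma matOrd_lt_matOrd {N : ℕ} {M : Matrix (Fin N) (Fin N) ℝ} (hM : M.IsSymm) {i j k l : Fin N}
    (hij : i ≠ j) (h : M i j < M k l) : matOrd M i j < matOrd M k l := by
  obtain ⟨q, hq, hMq⟩ : ∃ q : Fin N × Fin N, q.1 < q.2 ∧ M q.1 q.2 = M i j := by
    rcases hij.lt_or_gt with hlt | hlt
    · exact ⟨(i, j), hlt, rfl⟩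
    · exact ⟨(j, i), hlt, hM.apply i j⟩
  refine Finset.card_lt_card <| (Finset.ssubset_iff_of_subset <|
    Finset.monotone_filter_right _ fun _ _ hq => ⟨hq.1, hq.2.trans h⟩).2 ⟨q, ?_, ?_⟩
  · simpa [hMq] using ⟨hq, h⟩
  · simp [hMq]

lemma lt_of_matOrd_lt_matOrd {N : ℕ} (M : Matrix (Fin N) (Fin N) ℝ) {i j k l : Fin N}
    (h : matOrd M i j < matOrd M k l) : M i j < M k l :=
  lt_of_not_ge fun hle => (matOrd_le_matOrd M hle).not_gt h

lemma CrossEntriesSmallest.of_matOrd_eq {M D : Matrix (Fin 5) (Fin 5) ℝ} (hM : M.IsSymm)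
    (hMD : ∀ i j, i ≠ j → matOrd D i j = matOrd M i j) (h : CrossEntriesSmallest M) :
    CrossEntriesSmallest D := by
  intro i α j l hi hα hjl
  have hiα : i ≠ α := by
    simp only [Set.mem_insert_iff, Set.mem_singleton_iff] at hi hα
    rcases hi with rfl | rfl | rfl <;> rcases hα with rfl | rfl <;> decide
  have hjl' : j ≠ l := by
    simp only [Set.mem_insert_iff, Set.mem_singleton_iff, Prod.ext_iff] at hjl
    rcases hjl with ⟨rfl, rfl⟩ | ⟨rfl, rfl⟩ | ⟨rfl, rfl⟩ | ⟨rfl, rfl⟩ <;> decide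
  apply lt_of_matOrd_lt_matOrd
  rw [hMD i α hiα, hMD j l hjl']
  exact matOrd_lt_matOrd hM hiα (h i α j l hi hα hjl)

/-- There do not exist five points `p₀, …, p₄` in the Euclidean plane such that each
of the six distances `dist pᵢ p_α` (for `i ∈ {0,1,2}`, `α ∈ {3,4}`) is strictly
smaller than each of the remaining pairwise distances
`dist p₀ p₁, dist p₀ p₂, dist p₁ p₂, dist p₃ p₄`.  Consequently, a `5 × 5` matrix
ordering in which the six entries `M i α` (`i ∈ {0,1,2}`, `α ∈ {3,4}`) are the six
smallest off-diagonal entries cannot be geometrically realized by points in the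
plane (i.e. there is no family of points whose distance matrix `D` has `D̂ = M̂`). -/
theorem no_planar_realization_of_six_smallest_cross_distances :
    (¬ ∃ p : Fin 5 → EuclideanSpace ℝ (Fin 2),
      ∀ i α j l : Fin 5, i ∈ ({0, 1, 2} : Set (Fin 5)) → α ∈ ({3, 4} : Set (Fin 5)) →
        (j, l) ∈ ({(0, 1), (0, 2), (1, 2), (3, 4)} : Set (Fin 5 × Fin 5)) →
        dist (p i) (p α) < dist (p j) (p l)) ∧
    (∀ M : Matrix (Fin 5) (Fin 5) ℝ, M.IsSymm →
      (∀ i α j l : Fin 5, i ∈ ({0, 1, 2} : Set (Fin 5)) → α ∈ ({3, 4} : Set (Fin 5)) →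
        (j, l) ∈ ({(0, 1), (0, 2), (1, 2), (3, 4)} : Set (Fin 5 × Fin 5)) →
        M i α < M j l) →
      ¬ ∃ p : Fin 5 → EuclideanSpace ℝ (Fin 2),
        ∀ i j : Fin 5, i ≠ j →
          matOrd (Matrix.of fun a b : Fin 5 => dist (p a) (p b)) i j = matOrd M i j) := by
  refine ⟨fun ⟨p, hp⟩ => not_crossEntriesSmallest_dist_euclideanSpace p hp, ?_⟩
  rintro M hM hcross ⟨p, hp⟩
  exact not_crossEntriesSmallest_dist_euclideanSpace p
    (CrossEntriesSmallest.of_matOrd_eq hM hp hcross)
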